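/- Let H ∈ ℂ^{N×L} (with N ≤ L) have full row rank N, and write H^H = F·C where F ∈ ℂ^{L×N} has orthonormal columns (F^H F = I_N) and C ∈ ℂ^{N×N} is invertible. Suppose U ∈ ℂ^{N×d} and V ∈ ℂ^{L×m} satisfy U^H F^H V = 0. Then (C^{-1}U)^H H V = 0, and moreover rank(C^{-1}U) = rank(U); in particular if U has full column rank d then C^{-1}U has full column rank d. (Hence an interference-alignment solution computed from any orthonormal basis F of the row space of H yields, after the change of receive filter U ↦ C^{-1}U, an alignment solution for the true channel H.) -/

import Mathlib

open Matrix

theorem Matrix.conjTranspose_nonsing_inv_mul_mul_of_conjTranspose_eq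
    {l m n α : Type*} [Fintype n] [DecidableEq n] [CommRing α] [StarRing α]
    {H : Matrix n l α} {F : Matrix l n α} {C : Matrix n n α} (U : Matrix n m α)
    (hFC : Hᴴ = F * C) (hC : IsUnit C.det) :
    (C⁻¹ * U)ᴴ * H = Uᴴ * Fᴴ := by
  rw [← conjTranspose_conjTranspose H, hFC, ← conjTranspose_mul, ← conjTranspose_mul,
    Matrix.mul_assoc, mul_nonsing_inv_cancel_left _ _ hC]

theorem grassmannian_feedback_yields_alignment
    (N L d m : ℕ)
    (H : Matrix (Fin N) (Fin L) ℂ)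
    (F : Matrix (Fin L) (Fin N) ℂ) (C : Matrix (Fin N) (Fin N) ℂ)
    (hFC : Hᴴ = F * C) (hC : IsUnit C.det)
    (U : Matrix (Fin N) (Fin d) ℂ) (V : Matrix (Fin L) (Fin m) ℂ)
    (hIA : Uᴴ * Fᴴ * V = 0) :
    (C⁻¹ * U)ᴴ * H * V = 0 ∧ (C⁻¹ * U).rank = U.rank ∧
      (U.rank = d → (C⁻¹ * U).rank = d) := by
  have hrank : (C⁻¹ * U).rank = U.rank :=
    rank_mul_eq_right_of_isUnit_det _ _ (isUnit_nonsing_inv_det C hC)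
  refine ⟨?_, hrank, hrank.trans⟩
  rw [conjTranspose_nonsing_inv_mul_mul_of_conjTranspose_eq U hFC hC, hIA]
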